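/- For tensors A (ℓ×p×n) and B (p×m×n) with C = A*B, the squeezed j-th lateral slice of C equals the sum over i of squeeze(A_i)·circ(b_ij^T), where b_ij is the (i,j) tube of B: squeeze(C_j) = Σ_{i=1}^p squeeze(A_i)·circ(b_ij^T) for each j = 1,...,m. -/
import Mathlib

/-- The t-product of third-order tensors. -/
def tProd {ℓ p m n : ℕ} (A : Fin n → Matrix (Fin ℓ) (Fin p) ℝ)
    (B : Fin n → Matrix (Fin p) (Fin m) ℝ) : Fin n → Matrix (Fin ℓ) (Fin m) ℝ :=
  fun k => ∑ t : Fin n, A (k - t) * B t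

/-- `squeeze` of the j-th lateral slice of a tensor: the ℓ×n matrix (i,k) ↦ A^(k)_{i,j}. -/
def squeezeSlice {ℓ m n : ℕ} (A : Fin n → Matrix (Fin ℓ) (Fin m) ℝ) (j : Fin m) :
    Matrix (Fin ℓ) (Fin n) ℝ :=
  Matrix.of fun i k => A k i j

/-- For a tube b ∈ R^n, the circulant matrix circ(bᵀ), with (s,k) entry b^((k−s) mod n). -/
def circTube {n : ℕ} (b : Fin n → ℝ) : Matrix (Fin n) (Fin n) ℝ :=
  Matrix.of fun s k => b (k - s)

/-- Lateral-slice form of the t-product: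
`squeeze((A*B)_j) = ∑_i squeeze(A_i)·circ(b_{ij}ᵀ)`. -/
theorem tprod_lateral {ℓ p m n : ℕ}
    (A : Fin n → Matrix (Fin ℓ) (Fin p) ℝ)
    (B : Fin n → Matrix (Fin p) (Fin m) ℝ) (j : Fin m) :
    squeezeSlice (tProd A B) j
      = ∑ i : Fin p, squeezeSlice A i * circTube (fun k => B k i j) := by
  ext i k
  simp only [squeezeSlice, tProd, circTube, Matrix.sum_apply, Matrix.mul_apply, Matrix.of_apply]
  rw [Finset.sum_comm]
  refine Finset.sum_congr rfl fun q _ => ?_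
  have : NeZero n := ⟨fun h => by subst h; exact k.elim0⟩
  refine Finset.sum_nbij' (fun t => k - t) (fun s => k - s) (fun _ _ => Finset.mem_univ _)
    (fun _ _ => Finset.mem_univ _) (by intro t _; simp [sub_sub_cancel]) (by intro s _; simp [sub_sub_cancel]) ?_
  intro t _
  simp [sub_sub_cancel]
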